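/- arXiv:1003.3716 — 2 statements merged into one kernel-verified Lean document; each statement's English description precedes it below -/
import Mathlib

section
/- For an odd prime p, an integer r ≥ 1, and δ ∈ ℤ/p^rℤ with p ∤ δ a quadratic residue mod p, the number of triples (A,B,C) ∈ (ℤ/p^rℤ)³ with p ∤ gcd(A,B,C) and B² − 4AC ≡ δ (mod p^r) equals p^{2r−1}(p+1). -/
/-!
Since `p ∤ δ`, primitivity of `(A, B, C)` is automatic. Fix `A`. If `A` is a unit, `C` is
determined by `B`, which gives `p ^ r` solutions. If `p ∣ A`, then for every `C` the element
`4AC + δ` is a unit congruent to `δ` modulo `p`, hence a square, because the kernel of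
`(ℤ/p^r)ˣ → (ℤ/p)ˣ` has odd order `p ^ (r - 1)`; as `ℤ/p^r` is local and `2` is a unit, it has
exactly two square roots, which gives `2 p ^ r` solutions. There are `p ^ (r - 1)` non-units,
so the total is `p ^ r · p ^ r + p ^ (r - 1) · p ^ r = p ^ (2r - 1) (p + 1)`.
-/

open Finset

theorem MonoidHom.isSquare_of_isSquare_map {G H : Type*} [CommGroup G] [Group H] (f : G →* H)
    (hf : Function.Surjective f) (hker : Odd (Nat.card f.ker)) {g : G} (hg : IsSquare (f g)) :
    IsSquare g := by
  obtain ⟨h, hh⟩ := hg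
  obtain ⟨w, rfl⟩ := hf h
  have hmem : g * (w * w)⁻¹ ∈ f.ker := by
    rw [MonoidHom.mem_ker, map_mul, map_inv, map_mul, hh, mul_inv_cancel]
  obtain ⟨k, hk⟩ := (powCoprime (Nat.coprime_two_right.mpr hker)).surjective ⟨_, hmem⟩
  have hk_sq : (k : G) ^ 2 = g * (w * w)⁻¹ := congrArg Subtype.val hk
  refine ⟨k * w, ?_⟩
  rw [mul_mul_mul_comm, ← pow_two, hk_sq, inv_mul_cancel_right]

section IsLocalRing

variable {R : Type*} [CommRing R] [IsLocalRing R]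

theorem IsLocalRing.sq_eq_sq_iff_of_isUnit (h2 : IsUnit (2 : R)) {a b : R} (hb : IsUnit b) :
    a ^ 2 = b ^ 2 ↔ a = b ∨ a = -b := by
  refine ⟨fun h ↦ ?_, by rintro (rfl | rfl) <;> ring⟩
  have hprod : (a - b) * (a + b) = 0 := by linear_combination h
  have hsum : IsUnit ((a + b) + -(a - b)) := by convert h2.mul hb using 1; ring
  rcases isUnit_or_isUnit_of_isUnit_add hsum with hu | hu
  · left
    linear_combination hu.mul_left_eq_zero.mp hprod
  · right
    linear_combination ((IsUnit.neg_iff _).mp hu).mul_right_eq_zero.mp hprod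

theorem IsLocalRing.card_sq_eq_of_isUnit (h2 : IsUnit (2 : R)) {u : R} (hu : IsUnit u)
    (hsq : IsSquare u) : Nat.card {x : R // x ^ 2 = u} = 2 := by
  obtain ⟨b, rfl⟩ := hsq
  have hb : IsUnit b := isUnit_of_mul_isUnit_left hu
  have hne : b ≠ -b := fun h ↦ (h2.mul hb).ne_zero (by linear_combination h)
  calc Nat.card {x : R // x ^ 2 = b * b}
      = Nat.card ({b, -b} : Set R) := Nat.card_congr <| Equiv.subtypeEquivRight fun x ↦ by
        rw [← pow_two, sq_eq_sq_iff_of_isUnit h2 hb]; rfl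
    _ = 2 := by rw [Nat.card_coe_set_eq, Set.ncard_pair hne]

end IsLocalRing

section CommRing

variable {R : Type*} [CommRing R]

theorem card_sq_sub_mul_eq_of_isUnit {a : R} (ha : IsUnit a) (δ : R) :
    Nat.card {x : R × R // x.1 ^ 2 - a * x.2 = δ} = Nat.card R :=
  Nat.card_congr
    { toFun := fun x ↦ x.1.1
      invFun := fun b ↦ ⟨(b, ((ha.unit⁻¹ : Rˣ) : R) * (b ^ 2 - δ)), by
        rw [← mul_assoc, ha.mul_val_inv, one_mul, sub_sub_cancel]⟩
      left_inv := fun ⟨⟨b, c⟩, h⟩ ↦ by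
        ext
        · rfl
        · change _ * (b ^ 2 - δ) = c
          rw [← h, sub_sub_cancel, ← mul_assoc, ha.val_inv_mul, one_mul]
      right_inv := fun _ ↦ rfl }

theorem card_sq_sub_mul_eq_sum [Fintype R] (a δ : R) :
    Nat.card {x : R × R // x.1 ^ 2 - a * x.2 = δ}
      = ∑ c, Nat.card {b : R // b ^ 2 = a * c + δ} := by
  rw [← Nat.card_sigma]
  exact Nat.card_congr <|
    ((Equiv.prodComm R R).subtypeEquiv fun _ ↦ by exact sub_eq_iff_eq_add').trans
      (Equiv.subtypeProdEquivSigmaSubtype fun c b ↦ b ^ 2 = a * c + δ)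

end CommRing

theorem Finset.card_filter_isUnit (M : Type*) [Monoid M] [Fintype M] [DecidableEq M]
    [DecidablePred (IsUnit : M → Prop)] : #{x : M | IsUnit x} = Fintype.card Mˣ := by
  rw [← card_univ, ← card_map ⟨Units.val, Units.val_injective⟩]
  congr
  ext x
  simp [IsUnit, eq_comm]

namespace ZMod

variable {p r : ℕ}

theorem isUnit_two_of_odd {n : ℕ} (hn : Odd n) : IsUnit (2 : ZMod n) := by
  simpa using (isUnit_iff_coprime 2 n).mpr (Nat.coprime_two_left.mpr hn)

theorem isUnit_iff_not_natCast_dvd (hp : p.Prime) (hr : r ≠ 0) {x : ZMod (p ^ r)} :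
    IsUnit x ↔ ¬ (p : ZMod (p ^ r)) ∣ x := by
  have : NeZero (p ^ r) := ⟨pow_ne_zero r hp.ne_zero⟩
  refine ⟨fun hx hdvd ↦ prime_natCast_not_isUnit_pow hp (Nat.pos_of_ne_zero hr)
    (isUnit_of_dvd_unit hdvd hx), fun h ↦ ?_⟩
  rw [← natCast_zmod_val x, isUnit_natCast_iff_not_dvd_pow hp (Nat.pos_of_ne_zero hr)]
  rintro ⟨k, hk⟩
  exact h ⟨k, by rw [← natCast_zmod_val x, hk, Nat.cast_mul]⟩

theorem isLocalRing_primePow (hp : p.Prime) (hr : r ≠ 0) : IsLocalRing (ZMod (p ^ r)) :=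
  haveI : Nontrivial (ZMod (p ^ r)) :=
    nontrivial_iff.mpr (Nat.one_lt_pow hr hp.one_lt).ne'
  IsLocalRing.of_nonunits_add fun a b ha hb ↦ by
    simp only [mem_nonunits_iff, isUnit_iff_not_natCast_dvd hp hr, not_not] at ha hb ⊢
    exact dvd_add ha hb

theorem card_filter_not_isUnit_primePow [NeZero (p ^ r)]
    [DecidablePred (IsUnit : ZMod (p ^ r) → Prop)] (hp : p.Prime) (hr : r ≠ 0) :
    #{x : ZMod (p ^ r) | ¬ IsUnit x} = p ^ (r - 1) := by
  have := card_filter_add_card_filter_not (s := univ) (fun x : ZMod (p ^ r) ↦ IsUnit x)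
  rw [card_filter_isUnit, card_units_eq_totient, Nat.totient_prime_pow hp (Nat.pos_of_ne_zero hr),
    card_univ, card] at this
  have hpow : p ^ (r - 1) * (p - 1) + p ^ (r - 1) = p ^ r := by
    rw [← Nat.mul_add_one, Nat.sub_add_cancel hp.one_le, ← pow_succ,
      Nat.sub_add_cancel (Nat.one_le_iff_ne_zero.mpr hr)]
  omega

theorem card_ker_unitsMap_primePow (hp : p.Prime) (hr : r ≠ 0) :
    Nat.card (unitsMap (dvd_pow_self p hr)).ker = p ^ (r - 1) := by
  have : NeZero p := ⟨hp.ne_zero⟩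
  have : NeZero (p ^ r) := ⟨pow_ne_zero r hp.ne_zero⟩
  have h := Subgroup.card_mul_index (unitsMap (dvd_pow_self p hr)).ker
  rw [Subgroup.index_ker, MonoidHom.range_eq_top.mpr (unitsMap_surjective _), Subgroup.card_top,
    Nat.card_eq_fintype_card (α := (ZMod p)ˣ), Nat.card_eq_fintype_card (α := (ZMod (p ^ r))ˣ),
    card_units_eq_totient, card_units_eq_totient, Nat.totient_prime hp,
    Nat.totient_prime_pow hp (Nat.pos_of_ne_zero hr)] at h
  exact Nat.eq_of_mul_eq_mul_right (Nat.sub_pos_of_lt hp.one_lt) h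

theorem isSquare_of_isSquare_castHom (hp : p.Prime) (hodd : Odd p) (hr : r ≠ 0)
    {u : ZMod (p ^ r)} (hu : IsUnit u)
    (hsq : IsSquare (castHom (dvd_pow_self p hr) (ZMod p) u)) : IsSquare u := by
  have : NeZero (p ^ r) := ⟨pow_ne_zero r hp.ne_zero⟩
  obtain ⟨s, hs⟩ := hsq
  have hs_unit : IsUnit s := isUnit_of_mul_isUnit_left (hs ▸ hu.map _)
  obtain ⟨v, hv⟩ := (unitsMap (dvd_pow_self p hr)).isSquare_of_isSquare_map
    (unitsMap_surjective _) (card_ker_unitsMap_primePow hp hr ▸ hodd.pow)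
    ⟨hs_unit.unit, Units.ext (by simpa [unitsMap_def] using hs)⟩ (g := hu.unit)
  exact ⟨v, by rw [← hu.unit_spec, hv, Units.val_mul]⟩

theorem card_sq_sub_mul_eq_of_not_isUnit (hp : p.Prime) (hodd : Odd p) (hr : r ≠ 0)
    {δ : ZMod (p ^ r)} (hδ : IsUnit δ) (hsq : IsSquare (castHom (dvd_pow_self p hr) (ZMod p) δ))
    {a : ZMod (p ^ r)} (ha : ¬ IsUnit a) :
    Nat.card {x : ZMod (p ^ r) × ZMod (p ^ r) // x.1 ^ 2 - a * x.2 = δ} = 2 * p ^ r := by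
  have : NeZero (p ^ r) := ⟨pow_ne_zero r hp.ne_zero⟩
  have := isLocalRing_primePow hp hr
  rw [isUnit_iff_not_natCast_dvd hp hr, not_not] at ha
  have hfiber (c : ZMod (p ^ r)) : Nat.card {b : ZMod (p ^ r) // b ^ 2 = a * c + δ} = 2 := by
    have hu : IsUnit (a * c + δ) := by
      rw [isUnit_iff_not_natCast_dvd hp hr] at hδ ⊢
      exact fun h ↦ hδ ((dvd_add_right (ha.mul_right c)).mp h)
    refine IsLocalRing.card_sq_eq_of_isUnit (isUnit_two_of_odd hodd.pow) hu
      (isSquare_of_isSquare_castHom hp hodd hr hu ?_)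
    have ha0 : castHom (dvd_pow_self p hr) (ZMod p) a = 0 := by
      obtain ⟨k, rfl⟩ := ha
      rw [map_mul, map_natCast, natCast_self, zero_mul]
    rwa [map_add, map_mul, ha0, zero_mul, zero_add]
  rw [card_sq_sub_mul_eq_sum, sum_congr rfl fun c _ ↦ hfiber c, sum_const, card_univ, card,
    smul_eq_mul, mul_comm]

theorem card_discrim_eq (hp : p.Prime) (hodd : Odd p) (hr : r ≠ 0) {δ : ZMod (p ^ r)}
    (hδ : IsUnit δ) (hsq : IsSquare (castHom (dvd_pow_self p hr) (ZMod p) δ)) :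
    Nat.card {x : ZMod (p ^ r) × ZMod (p ^ r) × ZMod (p ^ r) // discrim x.1 x.2.1 x.2.2 = δ}
      = p ^ (2 * r - 1) * (p + 1) := by
  have : NeZero (p ^ r) := ⟨pow_ne_zero r hp.ne_zero⟩
  classical
  have h2 := isUnit_two_of_odd (n := p ^ r) hodd.pow
  have h4 : IsUnit (4 : ZMod (p ^ r)) := by
    rw [show (4 : ZMod (p ^ r)) = 2 * 2 by norm_num]
    exact h2.mul h2
  have hfiber (A : ZMod (p ^ r)) :
      Nat.card {x : ZMod (p ^ r) × ZMod (p ^ r) // x.1 ^ 2 - 4 * A * x.2 = δ}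
        = if IsUnit A then p ^ r else 2 * p ^ r := by
    split_ifs with hA
    · rw [card_sq_sub_mul_eq_of_isUnit (h4.mul hA), Nat.card_zmod]
    · exact card_sq_sub_mul_eq_of_not_isUnit hp hodd hr hδ hsq
        fun h ↦ hA (IsUnit.mul_iff.mp h).2
  unfold discrim
  rw [Nat.card_congr (Equiv.subtypeProdEquivSigmaSubtype
      fun A (x : ZMod (p ^ r) × ZMod (p ^ r)) ↦ x.1 ^ 2 - 4 * A * x.2 = δ),
    Nat.card_sigma, sum_congr rfl fun A _ ↦ hfiber A, sum_ite, sum_const, sum_const, smul_eq_mul,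
    smul_eq_mul, card_filter_isUnit, card_units_eq_totient,
    Nat.totient_prime_pow hp (Nat.pos_of_ne_zero hr), card_filter_not_isUnit_primePow hp hr]
  calc p ^ (r - 1) * (p - 1) * p ^ r + p ^ (r - 1) * (2 * p ^ r)
      = p ^ (r - 1 + r) * (p - 1 + 2) := by rw [pow_add]; ring
    _ = p ^ (2 * r - 1) * (p + 1) := by
      congr 1
      · congr 1; omega
      · have := hp.one_le; omega

end ZMod

theorem stmt_2 (p r : ℕ) (hp : p.Prime) (hodd : Odd p) (hr : 1 ≤ r)
    (δ : ZMod (p ^ r)) (hδ : ¬ (p : ZMod (p ^ r)) ∣ δ)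
    (hQR : IsSquare (ZMod.castHom (dvd_pow_self p (Nat.one_le_iff_ne_zero.mp hr)) (ZMod p) δ)) :
    Nat.card {x : ZMod (p ^ r) × ZMod (p ^ r) × ZMod (p ^ r) //
        ¬ ((p : ZMod (p ^ r)) ∣ x.1 ∧ (p : ZMod (p ^ r)) ∣ x.2.1 ∧ (p : ZMod (p ^ r)) ∣ x.2.2)
        ∧ x.2.1 ^ 2 - 4 * x.1 * x.2.2 = δ}
      = p ^ (2 * r - 1) * (p + 1) := by
  have hr0 : r ≠ 0 := Nat.one_le_iff_ne_zero.mp hr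
  rw [← ZMod.card_discrim_eq hp hodd hr0 ((ZMod.isUnit_iff_not_natCast_dvd hp hr0).mpr hδ) hQR]
  refine Nat.card_congr <| Equiv.subtypeEquivRight fun x ↦ and_iff_right_of_imp fun h ↦ ?_
  rintro ⟨hA, hB, -⟩
  exact hδ (h ▸ dvd_sub (dvd_pow hB two_ne_zero) ((hA.mul_left 4).mul_right _))
end

section
/- Let p be an odd prime, r ≥ 1, and α ∈ (ℤ/p^rℤ)*, and let l be an integer with 0 ≤ 2l < r. Then the solutions T ∈ ℤ/p^rℤ of T² ≡ α²p^{2l} (mod p^r) are exactly those of the form T ≡ ±α p^l + β p^{r−l} for some β ∈ ℤ/p^lℤ; in particular there are exactly 2p^l solutions. -/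
theorem stmt_7 (p r l : ℕ) (hp : p.Prime) (hodd : Odd p) (hr : 1 ≤ r) (hl : 2 * l < r)
    (α : (ZMod (p ^ r))ˣ) :
    (∀ T : ZMod (p ^ r),
      T ^ 2 = (α : ZMod (p ^ r)) ^ 2 * (p : ZMod (p ^ r)) ^ (2 * l) ↔
        ∃ β : ℕ, β < p ^ l ∧
          (T = (α : ZMod (p ^ r)) * (p : ZMod (p ^ r)) ^ l + (β : ZMod (p ^ r)) * (p : ZMod (p ^ r)) ^ (r - l)
          ∨ T = -(α : ZMod (p ^ r)) * (p : ZMod (p ^ r)) ^ l + (β : ZMod (p ^ r)) * (p : ZMod (p ^ r)) ^ (r - l)))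
    ∧ Nat.card {T : ZMod (p ^ r) //
        T ^ 2 = (α : ZMod (p ^ r)) ^ 2 * (p : ZMod (p ^ r)) ^ (2 * l)} = 2 * p ^ l := by
  haveI : NeZero (p ^ r) := ⟨pow_ne_zero _ hp.pos.ne'⟩
  have hPprime : Prime (p : ℤ) := Nat.prime_iff_prime_int.mp hp
  set A : ZMod (p ^ r) := (α : ZMod (p ^ r)) with hA
  set Pz : ZMod (p ^ r) := (p : ZMod (p ^ r)) with hPzdef
  have hle : l ≤ r := by omega
  have hP0 : Pz ^ r = 0 := by
    have := ZMod.natCast_self (p ^ r)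
    push_cast at this
    exact this
  -- squaring lemma
  have hsq : ∀ (s : ZMod (p ^ r)) (β : ℕ),
      (s * Pz ^ l + (β : ZMod (p ^ r)) * Pz ^ (r - l)) ^ 2 = s ^ 2 * Pz ^ (2 * l) := by
    intro s β
    have e1 : Pz ^ l * Pz ^ (r - l) = 0 := by
      rw [← pow_add, Nat.add_sub_cancel' hle, hP0]
    have e2 : Pz ^ (r - l) * Pz ^ (r - l) = 0 := by
      rw [← pow_add]
      have h : (r - l) + (r - l) = r + (r - 2 * l) := by omega
      rw [h, pow_add, hP0, zero_mul]
    have e3 : Pz ^ l * Pz ^ l = Pz ^ (2 * l) := by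
      rw [← pow_add]; ring_nf
    calc (s * Pz ^ l + (β : ZMod (p ^ r)) * Pz ^ (r - l)) ^ 2
        = s ^ 2 * (Pz ^ l * Pz ^ l) + (2 * s * β) * (Pz ^ l * Pz ^ (r - l))
          + (β : ZMod (p ^ r)) ^ 2 * (Pz ^ (r - l) * Pz ^ (r - l)) := by ring
      _ = s ^ 2 * Pz ^ (2 * l) := by rw [e1, e2, e3]; ring
  set a : ℤ := (A.val : ℤ) with ha
  have haA' : ((A.val : ℕ) : ZMod (p ^ r)) = A := by
    simp [ZMod.natCast_val, ZMod.cast_id]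
  have haA : ((a : ℤ) : ZMod (p ^ r)) = A := by
    rw [ha]; push_cast [haA']; rfl
  have hpa : ¬ ((p : ℤ) ∣ a) := by
    intro hdvd
    have hcop := ZMod.val_coe_unit_coprime α
    rw [ha] at hdvd
    have hpd : p ∣ A.val := by exact_mod_cast hdvd
    have : p ∣ Nat.gcd A.val (p ^ r) := Nat.dvd_gcd hpd (dvd_pow_self p (by omega))
    rw [hcop] at this
    have h1 := Nat.dvd_one.mp this
    have h2 := hp.two_le
    omega
  have hp2 : ¬ ((p : ℤ) ∣ 2) := by
    intro h
    have h2 : p ∣ 2 := by exact_mod_cast h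
    have := (Nat.prime_dvd_prime_iff_eq hp Nat.prime_two).mp h2
    rw [this, Nat.odd_iff] at hodd
    omega
  have hppos : (0:ℤ) < (p:ℤ) := by exact_mod_cast hp.pos
  -- conversion: multiples of p^(r-l) come from β < p^l
  have key : ∀ c : ℤ, ∃ β : ℕ, β < p ^ l ∧
      (β : ZMod (p ^ r)) * Pz ^ (r - l) = (((p:ℤ) ^ (r - l) * c : ℤ) : ZMod (p ^ r)) := by
    intro c
    have h0 : (0:ℤ) < (p:ℤ) ^ l := by positivity
    refine ⟨(c % ((p:ℤ) ^ l)).toNat, ?_, ?_⟩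
    · have h1 := Int.emod_nonneg c (ne_of_gt h0)
      have h2 := Int.emod_lt_of_pos c h0
      have : ((p:ℤ) ^ l) = ((p ^ l : ℕ) : ℤ) := by push_cast; ring
      omega
    · have hb : (((c % ((p:ℤ) ^ l)).toNat : ℕ) : ℤ) = c % ((p:ℤ) ^ l) :=
        Int.toNat_of_nonneg (Int.emod_nonneg c (ne_of_gt h0))
      have hz : ((((p:ℤ) ^ (r - l) * (c % ((p:ℤ) ^ l)) - (p:ℤ) ^ (r - l) * c : ℤ)) : ZMod (p ^ r)) = 0 := by
        rw [ZMod.intCast_zmod_eq_zero_iff_dvd]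
        have hdl : ((p:ℤ) ^ l) ∣ (c % ((p:ℤ) ^ l) - c) := by
          have := Int.emod_add_mul_ediv c ((p:ℤ) ^ l)
          exact ⟨-(c / ((p:ℤ) ^ l)), by linarith⟩
        obtain ⟨k, hk⟩ := hdl
        have : ((p ^ r : ℕ) : ℤ) = (p:ℤ) ^ (r - l) * (p:ℤ) ^ l := by
          push_cast
          rw [← pow_add]
          congr 1
          omega
        rw [this]
        exact ⟨k, by rw [← mul_sub, hk]; ring⟩
      have hz2 : (((p:ℤ) ^ (r - l) * (c % ((p:ℤ) ^ l)) : ℤ) : ZMod (p ^ r))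
          = (((p:ℤ) ^ (r - l) * c : ℤ) : ZMod (p ^ r)) := by
        rw [← sub_eq_zero, ← Int.cast_sub]
        exact hz
      have hgoal : ((((c % ((p:ℤ) ^ l)).toNat : ℕ)) : ZMod (p ^ r))
          = (((c % ((p:ℤ) ^ l)) : ℤ) : ZMod (p ^ r)) := by
        rw [← Int.cast_natCast, hb]
      rw [hgoal, ← hz2]
      push_cast
      ring
  -- forward direction
  have fwd : ∀ T : ZMod (p ^ r), T ^ 2 = A ^ 2 * Pz ^ (2 * l) →
      ∃ β : ℕ, β < p ^ l ∧ (T = A * Pz ^ l + (β : ZMod (p ^ r)) * Pz ^ (r - l)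
        ∨ T = -A * Pz ^ l + (β : ZMod (p ^ r)) * Pz ^ (r - l)) := by
    intro T hT
    set t : ℤ := (T.val : ℤ) with ht
    have hTt : ((t : ℤ) : ZMod (p ^ r)) = T := by
      simp only [ht]; push_cast; simp [ZMod.natCast_val, ZMod.cast_id]
    have hdvd : ((p:ℤ)) ^ r ∣ t ^ 2 - a ^ 2 * (p:ℤ) ^ (2 * l) := by
      have hz : ((t ^ 2 - a ^ 2 * (p:ℤ) ^ (2 * l) : ℤ) : ZMod (p ^ r)) = 0 := by
        push_cast
        rw [hTt, haA, hT]
        ring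
      have h := (ZMod.intCast_zmod_eq_zero_iff_dvd _ (p ^ r)).mp hz
      exact_mod_cast h
    have h2l : ((p:ℤ)) ^ (2 * l) ∣ t ^ 2 := by
      have h1 : ((p:ℤ)) ^ (2 * l) ∣ t ^ 2 - a ^ 2 * (p:ℤ) ^ (2 * l) :=
        dvd_trans (pow_dvd_pow _ (by omega)) hdvd
      have h2 : ((p:ℤ)) ^ (2 * l) ∣ a ^ 2 * (p:ℤ) ^ (2 * l) := dvd_mul_left _ _
      have e : t ^ 2 = (t ^ 2 - a ^ 2 * (p:ℤ) ^ (2 * l)) + a ^ 2 * (p:ℤ) ^ (2 * l) := by ring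
      rw [e]; exact dvd_add h1 h2
    have hlt : ((p:ℤ)) ^ l ∣ t := by
      have h1 : ((p:ℤ) ^ l) ^ 2 ∣ t ^ 2 := by
        rw [← pow_mul]
        have e : l * 2 = 2 * l := by ring
        rw [e]; exact h2l
      exact (Int.pow_dvd_pow_iff two_ne_zero).mp h1
    obtain ⟨s, hs⟩ := hlt
    have hfac : ((p:ℤ)) ^ (r - 2 * l) ∣ (s - a) * (s + a) := by
      have h1 : ((p:ℤ)) ^ (2 * l) * ((p:ℤ)) ^ (r - 2 * l) ∣ ((p:ℤ)) ^ (2 * l) * ((s - a) * (s + a)) := by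
        rw [← pow_add]
        have e : 2 * l + (r - 2 * l) = r := by omega
        rw [e]
        have e2 : t ^ 2 - a ^ 2 * (p:ℤ) ^ (2 * l) = (p:ℤ) ^ (2 * l) * ((s - a) * (s + a)) := by
          rw [hs]; ring
        rw [← e2]; exact hdvd
      exact (mul_dvd_mul_iff_left (pow_ne_zero _ (ne_of_gt hppos))).mp h1
    have hnot2 : ¬(((p:ℤ) ∣ (s - a)) ∧ ((p:ℤ) ∣ (s + a))) := by
      rintro ⟨h1, h2⟩
      have h3 : (p:ℤ) ∣ 2 * a := by
        have := dvd_sub h2 h1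
        have e : s + a - (s - a) = 2 * a := by ring
        rwa [e] at this
      rcases hPprime.dvd_mul.mp h3 with h | h
      · exact hp2 h
      · exact hpa h
    by_cases hc : (p:ℤ) ∣ (s + a)
    · have hnd : ¬ (p:ℤ) ∣ (s - a) := fun h => hnot2 ⟨h, hc⟩
      have hco : IsCoprime ((p:ℤ) ^ (r - 2 * l)) (s - a) :=
        IsCoprime.pow_left (hPprime.coprime_iff_not_dvd.mpr hnd)
      have hdd : ((p:ℤ)) ^ (r - 2 * l) ∣ s + a := hco.dvd_of_dvd_mul_left hfac
      obtain ⟨c, hcq⟩ := hdd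
      obtain ⟨β, hβ, hβe⟩ := key c
      refine ⟨β, hβ, Or.inr ?_⟩
      have e : (p:ℤ) ^ (r - l) * c = t + a * (p:ℤ) ^ l := by
        have e1 : (p:ℤ) ^ (r - l) = (p:ℤ) ^ l * (p:ℤ) ^ (r - 2 * l) := by
          rw [← pow_add]; congr 1; omega
        rw [e1, mul_assoc, ← hcq, hs]; ring
      have e2 : (((p:ℤ) ^ (r - l) * c : ℤ) : ZMod (p ^ r)) = T + A * Pz ^ l := by
        rw [e]
        push_cast
        rw [hTt, haA]
      have hfin : (β : ZMod (p ^ r)) * Pz ^ (r - l) = T + A * Pz ^ l := hβe.trans e2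
      linear_combination -hfin
    · have hnd : ¬ (p:ℤ) ∣ (s + a) := hc
      have hco : IsCoprime ((p:ℤ) ^ (r - 2 * l)) (s + a) :=
        IsCoprime.pow_left (hPprime.coprime_iff_not_dvd.mpr hnd)
      have hdd : ((p:ℤ)) ^ (r - 2 * l) ∣ s - a := by
        apply hco.dvd_of_dvd_mul_left
        have e : (s + a) * (s - a) = (s - a) * (s + a) := by ring
        rw [e]; exact hfac
      obtain ⟨c, hcq⟩ := hdd
      obtain ⟨β, hβ, hβe⟩ := key c
      refine ⟨β, hβ, Or.inl ?_⟩
      have e : (p:ℤ) ^ (r - l) * c = t - a * (p:ℤ) ^ l := by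
        have e1 : (p:ℤ) ^ (r - l) = (p:ℤ) ^ l * (p:ℤ) ^ (r - 2 * l) := by
          rw [← pow_add]; congr 1; omega
        rw [e1, mul_assoc, ← hcq, hs]; ring
      have e2 : (((p:ℤ) ^ (r - l) * c : ℤ) : ZMod (p ^ r)) = T - A * Pz ^ l := by
        rw [e]
        push_cast
        rw [hTt, haA]
      have hfin : (β : ZMod (p ^ r)) * Pz ^ (r - l) = T - A * Pz ^ l := hβe.trans e2
      linear_combination -hfin
  have hcastz : ∀ z : ℤ, ((z : ZMod (p ^ r)) = 0 ↔ ((p:ℤ)) ^ r ∣ z) := by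
    intro z
    rw [ZMod.intCast_zmod_eq_zero_iff_dvd]
    constructor <;> intro h <;> exact_mod_cast h
  have hinjβ : ∀ β β' : ℕ, β < p ^ l → β' < p ^ l →
      (β : ZMod (p ^ r)) * Pz ^ (r - l) = (β' : ZMod (p ^ r)) * Pz ^ (r - l) → β = β' := by
    intro β β' hβ hβ' h
    have hz : ((((β:ℤ) - β') * (p:ℤ) ^ (r - l) : ℤ) : ZMod (p ^ r)) = 0 := by
      push_cast
      linear_combination h
    rw [hcastz] at hz
    have hdl : ((p:ℤ)) ^ l ∣ ((β:ℤ) - β') := by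
      have e : ((p:ℤ)) ^ r = (p:ℤ) ^ (r - l) * (p:ℤ) ^ l := by
        rw [← pow_add]; congr 1; omega
      rw [e] at hz
      obtain ⟨k, hk⟩ := hz
      refine ⟨k, ?_⟩
      have hne : ((p:ℤ)) ^ (r - l) ≠ 0 := pow_ne_zero _ (ne_of_gt hppos)
      apply mul_left_cancel₀ hne
      linear_combination hk
    have habs : (β:ℤ) - β' = 0 := by
      apply Int.eq_zero_of_abs_lt_dvd hdl
      have h1 : ((p:ℤ))^l = ((p ^ l : ℕ):ℤ) := by push_cast; ring
      rw [h1, abs_lt]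
      constructor <;> omega
    omega
  have hsign : ∀ β β' : ℕ, β < p ^ l → β' < p ^ l →
      A * Pz ^ l + (β : ZMod (p ^ r)) * Pz ^ (r - l) ≠
        -A * Pz ^ l + (β' : ZMod (p ^ r)) * Pz ^ (r - l) := by
    intro β β' hβ hβ' h
    have hz : (((2 * a * (p:ℤ) ^ l - ((β':ℤ) - β) * (p:ℤ) ^ (r - l)) : ℤ) : ZMod (p ^ r)) = 0 := by
      push_cast
      rw [haA]
      linear_combination h
    rw [hcastz] at hz
    have hd1 : ((p:ℤ)) ^ (l + 1) ∣ 2 * a * (p:ℤ) ^ l := by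
      have h1 : ((p:ℤ)) ^ (l + 1) ∣ ((β':ℤ) - β) * (p:ℤ) ^ (r - l) :=
        Dvd.dvd.mul_left (pow_dvd_pow _ (by omega)) _
      have h2 : ((p:ℤ)) ^ (l + 1) ∣ (p:ℤ) ^ r := pow_dvd_pow _ (by omega)
      have h3 := dvd_add (h2.trans hz) h1
      have e : 2 * a * (p:ℤ) ^ l
          = (2 * a * (p:ℤ) ^ l - ((β':ℤ) - β) * (p:ℤ) ^ (r - l))
            + ((β':ℤ) - β) * (p:ℤ) ^ (r - l) := by ring
      rw [e]; exact h3
    have hpd : (p:ℤ) ∣ 2 * a := by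
      rw [pow_succ] at hd1
      obtain ⟨k, hk⟩ := hd1
      refine ⟨k, ?_⟩
      have hne : ((p:ℤ)) ^ l ≠ 0 := pow_ne_zero _ (ne_of_gt hppos)
      apply mul_left_cancel₀ hne
      linear_combination hk
    rcases hPprime.dvd_mul.mp hpd with hh | hh
    · exact hp2 hh
    · exact hpa hh
  have hiff : ∀ T : ZMod (p ^ r),
      T ^ 2 = A ^ 2 * Pz ^ (2 * l) ↔
        ∃ β : ℕ, β < p ^ l ∧
          (T = A * Pz ^ l + (β : ZMod (p ^ r)) * Pz ^ (r - l)
          ∨ T = -A * Pz ^ l + (β : ZMod (p ^ r)) * Pz ^ (r - l)) := by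
    intro T
    constructor
    · exact fwd T
    · rintro ⟨β, hβ, hb | hb⟩
      · rw [hb, hsq A β]
      · rw [hb, hsq (-A) β, neg_sq]
  refine ⟨hiff, ?_⟩
  have hf : ∀ (x : Bool × Fin (p ^ l)),
      ((cond x.1 A (-A)) * Pz ^ l + ((x.2 : ℕ) : ZMod (p ^ r)) * Pz ^ (r - l)) ^ 2
        = A ^ 2 * Pz ^ (2 * l) := by
    rintro ⟨ε, b⟩
    cases ε
    · simp only [Bool.cond_false]
      rw [hsq (-A), neg_sq]
    · simp only [Bool.cond_true]
      rw [hsq A]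
  let f : Bool × Fin (p ^ l) → {T : ZMod (p ^ r) // T ^ 2 = A ^ 2 * Pz ^ (2 * l)} :=
    fun x => ⟨(cond x.1 A (-A)) * Pz ^ l + ((x.2 : ℕ) : ZMod (p ^ r)) * Pz ^ (r - l), hf x⟩
  have hbij : Function.Bijective f := by
    constructor
    · rintro ⟨ε, b⟩ ⟨ε', b'⟩ hfe
      have hfe' : (cond ε A (-A)) * Pz ^ l + ((b : ℕ) : ZMod (p ^ r)) * Pz ^ (r - l)
          = (cond ε' A (-A)) * Pz ^ l + ((b' : ℕ) : ZMod (p ^ r)) * Pz ^ (r - l) :=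
        congrArg Subtype.val hfe
      cases ε <;> cases ε' <;>
        simp only [Bool.cond_false, Bool.cond_true] at hfe'
      · have hb : (b : ℕ) = (b' : ℕ) := hinjβ _ _ b.2 b'.2 (add_left_cancel hfe')
        simp [Prod.ext_iff, Fin.ext_iff, hb]
      · exact absurd hfe'.symm (hsign _ _ b'.2 b.2)
      · exact absurd hfe' (hsign _ _ b.2 b'.2)
      · have hb : (b : ℕ) = (b' : ℕ) := hinjβ _ _ b.2 b'.2 (add_left_cancel hfe')
        simp [Prod.ext_iff, Fin.ext_iff, hb]
    · rintro ⟨T, hT⟩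
      obtain ⟨β, hβ, hb | hb⟩ := fwd T hT
      · exact ⟨(true, ⟨β, hβ⟩), Subtype.ext (by simp only [f, Bool.cond_true]; exact hb.symm)⟩
      · exact ⟨(false, ⟨β, hβ⟩), Subtype.ext (by simp only [f, Bool.cond_false]; exact hb.symm)⟩
  have hcard := Nat.card_eq_of_bijective f hbij
  rw [← hcard]
  simp [Nat.card_eq_fintype_card]
end
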